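/- arXiv:2506.01603 — 6 statements merged into one kernel-verified Lean document; each statement's English description precedes it below -/
import Mathlib

section
/- Let φ, φ' ∈ (0, π) be fixed angles with φ ≥ φ', and consider points a, b, v, p in the plane with p on the segment ab, ∠avp = φ, ∠bvp = φ', and ‖a−v‖ + ‖v−b‖ = r. Then min{ ‖a−v‖ + ‖p−v‖, ‖b−v‖ + ‖p−v‖ } ≤ cos²(φ'/2) · r. -/
open Set Metric
open scoped ENNReal

noncomputable section

abbrev Euc (N : ℕ) := EuclideanSpace ℝ (Fin N)

open EuclideanGeometry Real

open scoped RealInnerProductSpace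

/-!
Put `v` at the origin. The cevian `vp` splits the triangle `avb` into two triangles, and adding
their areas gives `‖p - v‖ (‖a - v‖ sin φ + ‖b - v‖ sin φ') = ‖a - v‖ ‖b - v‖ sin (φ + φ')`
(in any real inner product space). Substituting this value of `‖p - v‖`, the bound becomes,
after clearing the positive denominator, a sum of nonnegative terms, using `cos φ ≤ cos φ'`.
-/

theorem min_add_le_cos_sq_half_mul {A B P φ φ' : ℝ} (hA : 0 ≤ A) (hB : 0 ≤ B)
    (hφ : φ ∈ Icc 0 π) (hφ' : φ' ∈ Icc 0 π) (hle : φ' ≤ φ)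
    (hpos : 0 < A * sin φ + B * sin φ')
    (harea : P * (A * sin φ + B * sin φ') = A * B * sin (φ + φ')) :
    min A B + P ≤ cos (φ' / 2) ^ 2 * (A + B) := by
  have hs : 0 ≤ sin φ := sin_nonneg_of_nonneg_of_le_pi hφ.1 hφ.2
  have hs' : 0 ≤ sin φ' := sin_nonneg_of_nonneg_of_le_pi hφ'.1 hφ'.2
  have hcos : cos φ ≤ cos φ' := cos_le_cos_of_nonneg_of_le_pi hφ'.1 hφ.2 hle
  have hc1 := cos_le_one φ'
  have hc2 := neg_one_le_cos φ'
  rw [cos_sq, mul_div_cancel₀ _ two_ne_zero, ← mul_le_mul_iff_left₀ hpos]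
  rw [sin_add] at harea
  -- For `A ≤ B` the gap is `(1 - cos φ') A sin φ (B - A) / 2
  --   + B sin φ' ((1 + cos φ') (B - A) + 2 A (cos φ' - cos φ)) / 2`, symmetrically for `B ≤ A`.
  rcases le_total A B with h | h
  · rw [min_eq_left h]
    linarith [mul_nonneg (mul_nonneg (mul_nonneg (sub_nonneg.2 hc1) hA) hs) (sub_nonneg.2 h),
      mul_nonneg (mul_nonneg hs' hB) (mul_nonneg hA (sub_nonneg.2 hcos)),
      mul_nonneg (mul_nonneg hs' hB) (mul_nonneg (neg_le_iff_add_nonneg.1 hc2) (sub_nonneg.2 h))]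
  · rw [min_eq_right h]
    linarith [mul_nonneg (mul_nonneg (mul_nonneg (neg_le_iff_add_nonneg.1 hc2) hs) hA)
        (sub_nonneg.2 h),
      mul_nonneg (mul_nonneg hs' hB) (mul_nonneg hA (sub_nonneg.2 hcos)),
      mul_nonneg (mul_nonneg hs' hB) (mul_nonneg (sub_nonneg.2 hc1) (sub_nonneg.2 h))]

namespace InnerProductGeometry

variable {V : Type*} [NormedAddCommGroup V] [InnerProductSpace ℝ V]

theorem norm_eq_mul_cos_angle_add_mul_cos_angle {x y w : V} {t₁ t₂ : ℝ}
    (hw : w = t₁ • x + t₂ • y) :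
    ‖w‖ = t₁ * ‖x‖ * cos (angle x w) + t₂ * ‖y‖ * cos (angle y w) := by
  rcases eq_or_ne w 0 with rfl | hw0
  · simp
  have hsq : ‖w‖ * ‖w‖ = ‖w‖ * (t₁ * ‖x‖ * cos (angle x w) + t₂ * ‖y‖ * cos (angle y w)) := by
    calc ‖w‖ * ‖w‖ = ⟪t₁ • x + t₂ • y, w⟫ := by rw [← hw, real_inner_self_eq_norm_mul_norm]
      _ = _ := by
        rw [inner_add_left, real_inner_smul_left, real_inner_smul_left,
          ← cos_angle_mul_norm_mul_norm x w, ← cos_angle_mul_norm_mul_norm y w]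
        ring
  exact mul_left_cancel₀ (norm_ne_zero_iff.2 hw0) hsq

theorem mul_norm_mul_sin_angle_eq {x y w : V} {t₁ t₂ : ℝ} (ht₁ : 0 ≤ t₁) (ht₂ : 0 ≤ t₂)
    (hw : w = t₁ • x + t₂ • y) :
    t₁ * ‖x‖ * sin (angle x w) = t₂ * ‖y‖ * sin (angle y w) := by
  -- The components of `t₁ • x` and `t₂ • y` orthogonal to `w` cancel; their squared lengths
  -- are compared through the law of cosines in the triangle `0, t₁ • x, w`.
  have hproj := norm_eq_mul_cos_angle_add_mul_cos_angle hw
  have hcos : ‖w - t₁ • x‖ ^ 2 = ‖t₂ • y‖ ^ 2 := by rw [hw, add_sub_cancel_left]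
  rw [norm_sub_sq_real, real_inner_smul_right, real_inner_comm, ← cos_angle_mul_norm_mul_norm,
    norm_smul, norm_smul, Real.norm_of_nonneg ht₁, Real.norm_of_nonneg ht₂] at hcos
  refine (sq_eq_sq₀ (by positivity [sin_angle_nonneg x w]) ?_).1 ?_
  · have := sin_angle_nonneg y w
    positivity
  · linear_combination (t₁ * ‖x‖) ^ 2 * sin_sq (angle x w) - (t₂ * ‖y‖) ^ 2 * sin_sq (angle y w)
      + hcos - (‖w‖ - t₁ * ‖x‖ * cos (angle x w) + t₂ * ‖y‖ * cos (angle y w)) * hproj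

theorem norm_mul_add_eq_mul_sin_add_of_mem_segment {x y w : V} (hw : w ∈ segment ℝ x y) :
    ‖w‖ * (‖x‖ * sin (angle x w) + ‖y‖ * sin (angle y w)) =
      ‖x‖ * ‖y‖ * sin (angle x w + angle y w) := by
  obtain ⟨t₁, t₂, ht₁, ht₂, hsum, hw⟩ := hw
  have hproj := norm_eq_mul_cos_angle_add_mul_cos_angle hw.symm
  have hperp := mul_norm_mul_sin_angle_eq ht₁ ht₂ hw.symm
  rw [sin_add]
  linear_combination (‖x‖ * sin (angle x w) + ‖y‖ * sin (angle y w)) * hproj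
    + (‖x‖ * cos (angle x w) - ‖y‖ * cos (angle y w)) * hperp
    + ‖x‖ * ‖y‖ * (cos (angle x w) * sin (angle y w) + sin (angle x w) * cos (angle y w)) * hsum

theorem min_norm_add_norm_le_of_mem_segment {x y w : V} {φ φ' : ℝ} (hφ : φ ∈ Ioo 0 π)
    (hφ' : φ' ∈ Ioo 0 π) (hle : φ' ≤ φ) (hw : w ∈ segment ℝ x y) (hx : angle x w = φ)
    (hy : angle y w = φ') :
    min (‖x‖ + ‖w‖) (‖y‖ + ‖w‖) ≤ cos (φ' / 2) ^ 2 * (‖x‖ + ‖y‖) := by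
  have hs := sin_pos_of_pos_of_lt_pi hφ.1 hφ.2
  have hs' := sin_pos_of_pos_of_lt_pi hφ'.1 hφ'.2
  rcases (by positivity : 0 ≤ ‖x‖ * sin φ + ‖y‖ * sin φ').eq_or_lt with hzero | hpos
  · have hx0 : x = 0 := norm_eq_zero.1 (by nlinarith [norm_nonneg x, norm_nonneg y])
    have hy0 : y = 0 := norm_eq_zero.1 (by nlinarith [norm_nonneg x, norm_nonneg y])
    subst hx0 hy0
    rw [segment_same, mem_singleton_iff] at hw
    simp [hw]
  rw [min_add_add_right]
  refine min_add_le_cos_sq_half_mul (norm_nonneg x) (norm_nonneg y) (Ioo_subset_Icc_self hφ)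
    (Ioo_subset_Icc_self hφ') hle hpos ?_
  rw [← hx, ← hy]
  exact norm_mul_add_eq_mul_sin_add_of_mem_segment hw

end InnerProductGeometry

/-- **Planar trigonometric optimization.** Let `φ ≥ φ'` be angles in `(0,π)` and let
`a, b, v, p` be points in the plane with `p` on the segment `ab`, `∠avp = φ`, `∠bvp = φ'`,
and `‖a−v‖ + ‖v−b‖ = r`. Then
`min(‖a−v‖ + ‖p−v‖, ‖b−v‖ + ‖p−v‖) ≤ cos²(φ'/2)·r`. -/
theorem planar_min_bound (φ φ' r : ℝ)
    (hφ : φ ∈ Set.Ioo 0 Real.pi) (hφ' : φ' ∈ Set.Ioo 0 Real.pi) (hle : φ' ≤ φ)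
    (a b v p : Euc 2) (hp : p ∈ segment ℝ a b)
    (hangle1 : EuclideanGeometry.angle a v p = φ)
    (hangle2 : EuclideanGeometry.angle b v p = φ')
    (hr : dist a v + dist v b = r) :
    min (dist a v + dist p v) (dist b v + dist p v) ≤ Real.cos (φ' / 2) ^ 2 * r := by
  have hseg : p - v ∈ segment ℝ (a - v) (b - v) := by
    simpa only [neg_add_eq_sub] using (mem_segment_translate ℝ (-v)).2 hp
  rw [← hr, dist_comm v b, dist_eq_norm a v, dist_eq_norm b v, dist_eq_norm p v]
  exact InnerProductGeometry.min_norm_add_norm_le_of_mem_segment hφ hφ' hle hseg hangle1 hangle2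
end
end

section
/- In the configuration of the previous trigonometric lemma (p on segment ab, ∠bvp = φ' with φ' ≤ φ = ∠avp), if q is a point at Euclidean distance at most ε from the line through a and b, and q lies on the ray from v through p, then ‖p−q‖ ≤ ε / √(2(1 − cos²(φ'/2))) = ε / sin(φ'). -/
open Set Metric
open scoped ENNReal

noncomputable section

open EuclideanGeometry Real

/-!
Since `q` lies on the line `vp`, the segment `pq` meets the line `ab` at the angle `θ = ∠apv`
or at `π - θ`, so the distance from `q` to the line `ab` is at least `‖p - q‖ sin θ`
(law of sines in the triangle `pqy`, for every point `y` of the line). Finally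
`φ' < θ < π - φ ≤ π - φ'` gives `sin θ ≥ sin φ'`.
-/

theorem Real.sin_le_sin_of_le_of_le_pi_sub {x y : ℝ} (hx : 0 ≤ x) (hxy : x ≤ y)
    (hy : y ≤ π - x) : sin x ≤ sin y := by
  rcases le_or_gt y (π / 2) with h | h
  · exact sin_le_sin_of_le_of_le_pi_div_two (by linarith [pi_pos]) h hxy
  · rw [← sin_pi_sub y]
    exact sin_le_sin_of_le_of_le_pi_div_two (by linarith [pi_pos]) (by linarith) (by linarith)

namespace InnerProductGeometry

variable {V : Type*} [NormedAddCommGroup V] [InnerProductSpace ℝ V]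

theorem sin_angle_smul_left (x y : V) {r : ℝ} (hr : r ≠ 0) :
    sin (angle (r • x) y) = sin (angle x y) := by
  rcases hr.lt_or_gt with hr | hr
  · rw [angle_smul_left_of_neg x y hr, angle_neg_left, sin_pi_sub]
  · rw [angle_smul_left_of_pos x y hr]

theorem sin_angle_smul_right (x y : V) {r : ℝ} (hr : r ≠ 0) :
    sin (angle x (r • y)) = sin (angle x y) := by
  rw [angle_comm, sin_angle_smul_left y x hr, angle_comm]

end InnerProductGeometry

namespace EuclideanGeometry

variable {V P : Type*} [NormedAddCommGroup V] [InnerProductSpace ℝ V] [MetricSpace P]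
  [NormedAddTorsor V P]

theorem dist_mul_sin_angle_le_dist (p q y : P) : dist p q * sin (∠ y p q) ≤ dist q y := by
  calc dist p q * sin (∠ y p q) = sin (∠ q y p) * dist q y := by
        rw [mul_comm, law_sin y p q]
    _ ≤ 1 * dist q y := by gcongr; exact sin_le_one _
    _ = dist q y := one_mul _

theorem sin_angle_eq_of_mem_affineSpan_pair {p a v y q : P} (hy : y ∈ line[ℝ, p, a])
    (hyp : y ≠ p) (hq : q ∈ line[ℝ, p, v]) (hqp : q ≠ p) : sin (∠ y p q) = sin (∠ a p v) := by
  rw [← vsub_vadd y p, vadd_left_mem_affineSpan_pair] at hy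
  rw [← vsub_vadd q p, vadd_left_mem_affineSpan_pair] at hq
  obtain ⟨r, hr⟩ := hy
  obtain ⟨s, hs⟩ := hq
  have hr0 : r ≠ 0 := by rintro rfl; exact hyp (vsub_eq_zero_iff_eq.1 (by simp [← hr]))
  have hs0 : s ≠ 0 := by rintro rfl; exact hqp (vsub_eq_zero_iff_eq.1 (by simp [← hs]))
  rw [angle, angle, ← hr, ← hs, InnerProductGeometry.sin_angle_smul_left _ _ hr0,
    InnerProductGeometry.sin_angle_smul_right _ _ hs0]

theorem dist_mul_sin_angle_le_infDist {p a v q : P} (hq : q ∈ line[ℝ, p, v]) :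
    dist p q * sin (∠ a p v) ≤ infDist q (line[ℝ, p, a] : Set P) := by
  rw [le_infDist ⟨p, left_mem_affineSpan_pair ℝ p a⟩]
  intro y hy
  by_cases hqp : q = p
  · simp [hqp]
  by_cases hyp : y = p
  · calc dist p q * sin (∠ a p v) ≤ dist p q * 1 := by gcongr; exact sin_le_one _
      _ = dist q y := by rw [mul_one, hyp, dist_comm]
  · rw [← sin_angle_eq_of_mem_affineSpan_pair hy hyp hq hqp]
    exact dist_mul_sin_angle_le_dist p q y

end EuclideanGeometry

theorem planar_perp_bound_general (φ φ' ε : ℝ)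
    (hφ : φ ∈ Set.Ioo 0 Real.pi) (hφ' : φ' ∈ Set.Ioo 0 Real.pi) (hle : φ' ≤ φ)
    (a b v p q : Euc 2) (hp : p ∈ segment ℝ a b)
    (hangle1 : EuclideanGeometry.angle a v p = φ)
    (hθ : φ' < EuclideanGeometry.angle a p v ∧
      EuclideanGeometry.angle a p v < Real.pi - φ)
    (hray : ∃ t : ℝ, 0 ≤ t ∧ q = v + t • (p - v))
    (hq : Metric.infDist q (affineSpan ℝ {a, b} : Set (Euc 2)) ≤ ε) :
    dist p q ≤ ε / Real.sin φ' := by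
  obtain ⟨t, -, rfl⟩ := hray
  have hpa : p ≠ a := by
    rintro rfl
    have hφ_lt : φ < π / 2 := by
      have := hθ.2
      rw [angle_self_left] at this
      linarith
    rcases eq_or_ne p v with rfl | hpv
    · rw [angle_self_left] at hangle1
      linarith
    · rw [angle_self_of_ne hpv] at hangle1
      linarith [hφ.1]
  have hq_line : v + t • (p - v) ∈ line[ℝ, p, v] := by
    rw [Set.pair_comm]
    simpa [AffineMap.lineMap_apply, add_comm] using AffineMap.lineMap_mem_affineSpan_pair t v p
  have hab_le : line[ℝ, a, b] ≤ line[ℝ, p, a] :=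
    affineSpan_pair_le_of_mem_of_mem (right_mem_affineSpan_pair ℝ p a)
      ((mem_segment_iff_wbtw.1 hp).collinear.mem_affineSpan_of_mem_of_ne (p₁ := p) (p₂ := a)
        (p₃ := b) (by simp) (by simp) (by simp) hpa)
  have hsin : sin φ' ≤ sin (∠ a p v) :=
    sin_le_sin_of_le_of_le_pi_sub hφ'.1.le hθ.1.le (by linarith [hθ.2])
  rw [le_div_iff₀ (sin_pos_of_pos_of_lt_pi hφ'.1 hφ'.2)]
  calc dist p (v + t • (p - v)) * sin φ'
      ≤ dist p (v + t • (p - v)) * sin (∠ a p v) := by gcongr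
    _ ≤ infDist (v + t • (p - v)) (line[ℝ, p, a] : Set (Euc 2)) :=
        dist_mul_sin_angle_le_infDist hq_line
    _ ≤ infDist (v + t • (p - v)) (line[ℝ, a, b] : Set (Euc 2)) :=
        infDist_le_infDist_of_subset hab_le ⟨a, left_mem_affineSpan_pair ℝ a b⟩
    _ ≤ ε := hq

/-- **Perpendicular offset bound.** In the configuration of the planar trigonometric lemma
(`p` on segment `ab`, `∠avp = φ`, `∠bvp = φ'` with `φ' ≤ φ`, and `θ = ∠apv ∈ (φ', π−φ)`),
if `q` is within Euclidean distance `ε` of the line through `a` and `b` and `q` lies on the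
ray from `v` through `p`, then `‖p−q‖ ≤ ε / sin φ'`. -/
theorem planar_perp_bound (φ φ' ε : ℝ)
    (hφ : φ ∈ Set.Ioo 0 Real.pi) (hφ' : φ' ∈ Set.Ioo 0 Real.pi) (hle : φ' ≤ φ)
    (a b v p q : Euc 2) (hp : p ∈ segment ℝ a b)
    (hangle1 : EuclideanGeometry.angle a v p = φ)
    (hangle2 : EuclideanGeometry.angle b v p = φ')
    (hθ : φ' < EuclideanGeometry.angle a p v ∧
      EuclideanGeometry.angle a p v < Real.pi - φ)
    (hray : ∃ t : ℝ, 0 ≤ t ∧ q = v + t • (p - v))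
    (hq : Metric.infDist q (affineSpan ℝ {a, b} : Set (Euc 2)) ≤ ε) :
    dist p q ≤ ε / Real.sin φ' :=
  planar_perp_bound_general φ φ' ε hφ hφ' hle a b v p q hp hangle1 hθ hray hq
end
end

section
/- For angles φ, φ' ∈ (0, π) with φ ≥ φ', the function x(θ) = [1/sin θ + 1/sin(θ+φ)] / [1/sin(θ+φ) + 1/sin(θ−φ')] is strictly increasing on the interval (φ', π/2 − (φ−φ')/2]. -/
/-!
Write `x = (u₁ + u₂) / (u₂ + u₃)` with `uᵢ = 1 / sin (θ + αᵢ)`. Since `uᵢ' = -cot (θ + αᵢ) uᵢ`,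
the numerator of `x'` is a sum of the three Wronskians `uᵢ' uⱼ - uᵢ uⱼ'`, and each of these is
`sin (αᵢ - αⱼ) / (sin² (θ + αᵢ) sin² (θ + αⱼ))`. For `(α₁, α₂, α₃) = (0, φ, -φ')` only the first
one, `-sin φ / (sin² θ sin² (θ + φ))`, is negative. On the interval, `sin (θ - φ')` is the smallest
of the three sines, so the other two Wronskians together are at least
`(sin φ' + sin (φ + φ')) / (sin² θ sin² (θ + φ))`, and `sin φ < sin φ' + sin (φ + φ')` because
`φ + φ' < π`.
-/

open Set Metric
open scoped ENNReal

noncomputable section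

open Real

lemma sin_le_sin_of_add_le_pi {u v : ℝ} (hu : 0 ≤ u) (huv : u ≤ v) (hsum : u + v ≤ π) :
    sin u ≤ sin v := by
  have h := sin_sub_sin v u
  have hs : 0 ≤ sin ((v - u) / 2) := sin_nonneg_of_nonneg_of_le_pi (by linarith) (by linarith)
  have hc : 0 ≤ cos ((v + u) / 2) := cos_nonneg_of_mem_Icc ⟨by linarith, by linarith⟩
  nlinarith [mul_nonneg hs hc]

lemma sin_lt_sin_add_sin_add {a b : ℝ} (hb : b ∈ Ioo 0 π) (hab : a + b ∈ Ioo 0 π) :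
    sin a < sin b + sin (a + b) := by
  have hsb : 0 < sin b := sin_pos_of_pos_of_lt_pi hb.1 hb.2
  have hsab : 0 < sin (a + b) := sin_pos_of_pos_of_lt_pi hab.1 hab.2
  have hcb : cos b < 1 := by
    refine lt_of_le_of_ne (cos_le_one b) fun h => hb.1.ne' ?_
    exact (cos_eq_one_iff_of_lt_of_lt (by linarith [hb.1, pi_pos]) (by linarith [hb.2, pi_pos])).1 h
  have hexp : sin a = sin (a + b) * cos b - cos (a + b) * sin b := by
    rw [← sin_sub, add_sub_cancel_right]
  nlinarith [neg_one_le_cos (a + b)]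

lemma csc_wronskian {u v : ℝ} (hu : sin u ≠ 0) (hv : sin v ≠ 0) :
    -cos u / sin u ^ 2 * (1 / sin v) - 1 / sin u * (-cos v / sin v ^ 2) =
      sin (u - v) / (sin u ^ 2 * sin v ^ 2) := by
  rw [sin_sub]
  field_simp
  ring

lemma hasDerivAt_one_div_sin_add (a x : ℝ) (h : sin (x + a) ≠ 0) :
    HasDerivAt (fun y => 1 / sin (y + a)) (-cos (x + a) / sin (x + a) ^ 2) x := by
  simpa [one_div, Pi.inv_def] using (((hasDerivAt_id x).add_const a).sin).inv h

lemma hasDerivAt_csc_ratio (a b c x : ℝ) (ha : sin (x + a) ≠ 0) (hb : sin (x + b) ≠ 0)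
    (hc : sin (x + c) ≠ 0) (hq : 1 / sin (x + b) + 1 / sin (x + c) ≠ 0) :
    HasDerivAt (fun y => (1 / sin (y + a) + 1 / sin (y + b)) / (1 / sin (y + b) + 1 / sin (y + c)))
      ((sin (a - b) / (sin (x + a) ^ 2 * sin (x + b) ^ 2) +
          sin (a - c) / (sin (x + a) ^ 2 * sin (x + c) ^ 2) +
          sin (b - c) / (sin (x + b) ^ 2 * sin (x + c) ^ 2)) /
        (1 / sin (x + b) + 1 / sin (x + c)) ^ 2) x := by
  have hA := hasDerivAt_one_div_sin_add a x ha
  have hB := hasDerivAt_one_div_sin_add b x hb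
  have hC := hasDerivAt_one_div_sin_add c x hc
  refine ((hA.add hB).div (hB.add hC) hq).congr_deriv ?_
  have hab := csc_wronskian ha hb
  have hac := csc_wronskian ha hc
  have hbc := csc_wronskian hb hc
  simp only [add_sub_add_left_eq_sub] at hab hac hbc
  simp only [Pi.add_apply]
  rw [← hab, ← hac, ← hbc]
  ring

lemma neg_div_add_div_add_div_pos {p q r s₁ s₂ s₃ : ℝ} (hq : 0 ≤ q) (hr : 0 ≤ r)
    (hpqr : p < q + r) (hs₃ : 0 < s₃) (h₃₁ : s₃ ≤ s₁) (h₃₂ : s₃ ≤ s₂) :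
    0 < -p / (s₁ ^ 2 * s₂ ^ 2) + q / (s₁ ^ 2 * s₃ ^ 2) + r / (s₂ ^ 2 * s₃ ^ 2) := by
  have hs₁ := hs₃.trans_le h₃₁
  have hs₂ := hs₃.trans_le h₃₂
  have h₁₃ : s₁ ^ 2 * s₃ ^ 2 ≤ s₁ ^ 2 * s₂ ^ 2 := by gcongr
  have h₂₃ : s₂ ^ 2 * s₃ ^ 2 ≤ s₁ ^ 2 * s₂ ^ 2 := by rw [mul_comm (s₁ ^ 2)]; gcongr
  calc 0 < (q + r - p) / (s₁ ^ 2 * s₂ ^ 2) := div_pos (by linarith) (by positivity)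
    _ = -p / (s₁ ^ 2 * s₂ ^ 2) + q / (s₁ ^ 2 * s₂ ^ 2) + r / (s₁ ^ 2 * s₂ ^ 2) := by ring
    _ ≤ -p / (s₁ ^ 2 * s₂ ^ 2) + q / (s₁ ^ 2 * s₃ ^ 2) + r / (s₂ ^ 2 * s₃ ^ 2) := by
      gcongr

lemma sin_sub_pos_and_le_of_mem_Ioc {φ φ' θ : ℝ} (hφ : 0 ≤ φ) (hφ' : 0 ≤ φ')
    (hθ : θ ∈ Ioc φ' (π / 2 - (φ - φ') / 2)) :
    0 < sin (θ - φ') ∧ sin (θ - φ') ≤ sin θ ∧ sin (θ - φ') ≤ sin (θ + φ) := by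
  obtain ⟨h₁, h₂⟩ := hθ
  refine ⟨sin_pos_of_pos_of_lt_pi (by linarith) (by linarith [pi_pos]),
    sin_le_sin_of_add_le_pi (by linarith) (by linarith) (by linarith),
    sin_le_sin_of_add_le_pi (by linarith) (by linarith) (by linarith)⟩

theorem x_strict_mono_general (φ φ' : ℝ)
    (hφ : φ ∈ Set.Ioo 0 Real.pi) (hφ' : φ' ∈ Set.Ioo 0 Real.pi) :
    StrictMonoOn
      (fun θ : ℝ =>
        (1 / Real.sin θ + 1 / Real.sin (θ + φ)) /
          (1 / Real.sin (θ + φ) + 1 / Real.sin (θ - φ')))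
      (Set.Ioc φ' (Real.pi / 2 - (φ - φ') / 2)) := by
  have key : ∀ θ ∈ Ioc φ' (π / 2 - (φ - φ') / 2), ∃ f',
      HasDerivAt (fun θ : ℝ => (1 / sin θ + 1 / sin (θ + φ)) /
        (1 / sin (θ + φ) + 1 / sin (θ - φ'))) f' θ ∧ 0 < f' := by
    intro θ hθ
    have hsum : φ + φ' < π := by linarith [hθ.1, hθ.2]
    obtain ⟨h₃, h₃₁, h₃₂⟩ := sin_sub_pos_and_le_of_mem_Ioc hφ.1.le hφ'.1.le hθ
    have h₁ := h₃.trans_le h₃₁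
    have h₂ := h₃.trans_le h₃₂
    have hderiv := hasDerivAt_csc_ratio 0 φ (-φ') θ
    simp only [add_zero, zero_add, ← sub_eq_add_neg, zero_sub, sub_neg_eq_add, sin_neg] at hderiv
    refine ⟨_, hderiv h₁.ne' h₂.ne' h₃.ne' (by positivity), div_pos ?_ (by positivity)⟩
    exact neg_div_add_div_add_div_pos
      (sin_pos_of_pos_of_lt_pi hφ'.1 (by linarith [hφ.1])).le
      (sin_pos_of_pos_of_lt_pi (by linarith [hφ.1, hφ'.1]) hsum).le
      (sin_lt_sin_add_sin_add ⟨hφ'.1, by linarith [hφ.1]⟩ ⟨by linarith [hφ.1, hφ'.1], hsum⟩)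
      h₃ h₃₁ h₃₂
  refine strictMonoOn_of_deriv_pos (convex_Ioc _ _) (fun θ hθ => ?_) fun θ hθ => ?_
  · obtain ⟨f', hf', -⟩ := key θ hθ
    exact hf'.continuousAt.continuousWithinAt
  · obtain ⟨f', hf', hpos⟩ := key θ (interior_subset hθ)
    rwa [hf'.deriv]

/-- **Monotonicity lemma (increasing branch).** For angles `φ ≥ φ'` in `(0,π)`, the function
`x(θ) = [1/sin θ + 1/sin(θ+φ)] / [1/sin(θ+φ) + 1/sin(θ−φ')]` is strictly increasing on
`(φ', π/2 − (φ−φ')/2]`. -/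
theorem x_strict_mono (φ φ' : ℝ)
    (hφ : φ ∈ Set.Ioo 0 Real.pi) (hφ' : φ' ∈ Set.Ioo 0 Real.pi) (hle : φ' ≤ φ) :
    StrictMonoOn
      (fun θ : ℝ =>
        (1 / Real.sin θ + 1 / Real.sin (θ + φ)) /
          (1 / Real.sin (θ + φ) + 1 / Real.sin (θ - φ')))
      (Set.Ioc φ' (Real.pi / 2 - (φ - φ') / 2)) :=
  x_strict_mono_general φ φ' hφ hφ'
end
end

section
/- For angles φ, φ' ∈ (0, π) with φ ≥ φ', the function y(θ) = [1/sin θ + 1/sin(θ−φ')] / [1/sin(θ+φ) + 1/sin(θ−φ')] is strictly decreasing on the interval [π/2 − (φ−φ')/2, π − φ). -/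
open Set Metric
open scoped ENNReal

noncomputable section

/-!
Clearing denominators, the sign of `y'` is that of
`sin²(θ+φ) sin φ' - sin²(θ-φ') sin φ - sin²θ sin(φ+φ')`. Since
`sin²(θ+φ) - sin²(θ-φ') = sin(2θ+φ-φ') sin(φ+φ')`, this equals
`sin²(θ-φ') (sin φ' - sin φ) + sin(φ+φ') (sin(2θ+φ-φ') sin φ' - sin²θ)`, which is negative because
`sin φ' ≤ sin φ` and `2θ+φ-φ' ∈ [π, 2π)` on the interval.
-/

open Real

theorem Real.sin_sq_sub_sin_sq (x y : ℝ) : sin x ^ 2 - sin y ^ 2 = sin (x + y) * sin (x - y) := by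
  rw [sin_add, sin_sub]
  nlinarith [sin_sq_add_cos_sq x, sin_sq_add_cos_sq y]

theorem Real.sin_le_sin_of_le_of_add_le_pi {x y : ℝ} (hy : 0 ≤ y) (hyx : y ≤ x)
    (hxy : x + y ≤ π) : sin y ≤ sin x := by
  have h₁ : 0 ≤ sin ((x - y) / 2) := sin_nonneg_of_nonneg_of_le_pi (by linarith) (by linarith)
  have h₂ : 0 ≤ cos ((x + y) / 2) := cos_nonneg_of_mem_Icc ⟨by linarith, by linarith⟩
  nlinarith [sin_sub_sin x y]

def sinRatio (φ φ' θ : ℝ) : ℝ :=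
  (1 / sin θ + 1 / sin (θ - φ')) / (1 / sin (θ + φ) + 1 / sin (θ - φ'))

theorem hasDerivAt_sinRatio {φ φ' θ : ℝ} (ha : sin θ ≠ 0) (hb : sin (θ - φ') ≠ 0)
    (hc : sin (θ + φ) ≠ 0) (hbc : sin (θ - φ') + sin (θ + φ) ≠ 0) :
    HasDerivAt (sinRatio φ φ')
      ((sin (θ + φ) ^ 2 * sin φ' - sin (θ - φ') ^ 2 * sin φ - sin θ ^ 2 * sin (φ + φ')) /
        (sin θ * (sin (θ - φ') + sin (θ + φ))) ^ 2) θ := by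
  have hinv : ∀ {ψ : ℝ}, sin (θ + ψ) ≠ 0 →
      HasDerivAt (fun t ↦ 1 / sin (t + ψ)) (-cos (θ + ψ) / sin (θ + ψ) ^ 2) θ := fun {ψ} h ↦ by
    simpa [one_div] using (((hasDerivAt_id θ).add_const ψ).sin).fun_inv h
  have hA := hinv (ψ := 0) (by simpa using ha)
  have hB := hinv (ψ := -φ') (by simpa [← sub_eq_add_neg] using hb)
  have hC := hinv (ψ := φ) hc
  simp only [add_zero, ← sub_eq_add_neg] at hA hB
  have hD : 1 / sin (θ + φ) + 1 / sin (θ - φ') ≠ 0 := by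
    rw [div_add_div _ _ hc hb, one_mul, mul_one]
    exact div_ne_zero hbc (mul_ne_zero hc hb)
  refine ((hA.fun_add hB).fun_div (hC.fun_add hB) hD).congr_deriv ?_
  have e₁ : sin φ = sin (θ + φ) * cos θ - cos (θ + φ) * sin θ := by
    rw [← sin_sub, add_sub_cancel_left]
  have e₂ : sin φ' = sin θ * cos (θ - φ') - cos θ * sin (θ - φ') := by
    rw [← sin_sub, sub_sub_cancel]
  have e₃ : sin (φ + φ') = sin (θ + φ) * cos (θ - φ') - cos (θ + φ) * sin (θ - φ') := by
    rw [← sin_sub]; ring_nf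
  rw [e₁, e₂, e₃]
  field_simp
  ring

theorem sinRatio_deriv_numerator_neg {φ φ' θ : ℝ} (hφ' : 0 < φ') (hle : φ' ≤ φ)
    (hθ₁ : π / 2 - (φ - φ') / 2 ≤ θ) (hθ₂ : θ < π - φ) :
    sin (θ + φ) ^ 2 * sin φ' - sin (θ - φ') ^ 2 * sin φ - sin θ ^ 2 * sin (φ + φ') < 0 := by
  have hsq : sin (θ + φ) ^ 2 = sin (θ - φ') ^ 2 + sin (2 * θ + φ - φ') * sin (φ + φ') := by
    rw [← sub_eq_iff_eq_add', sin_sq_sub_sin_sq]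
    ring_nf
  have hS : sin (2 * θ + φ - φ') ≤ 0 := by
    rw [← sin_sub_two_pi]
    exact sin_nonpos_of_nonpos_of_neg_pi_le (by linarith) (by linarith)
  have hsin : sin φ' ≤ sin φ := sin_le_sin_of_le_of_add_le_pi hφ'.le hle (by linarith)
  have hθ : 0 < sin θ := sin_pos_of_pos_of_lt_pi (by linarith) (by linarith)
  have hφ'pos : 0 < sin φ' := sin_pos_of_pos_of_lt_pi hφ' (by linarith)
  have hsum : 0 < sin (φ + φ') := sin_pos_of_pos_of_lt_pi (by linarith) (by linarith)
  rw [hsq]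
  nlinarith [mul_nonneg (sq_nonneg (sin (θ - φ'))) (sub_nonneg.2 hsin),
    mul_nonneg hsum.le (mul_nonneg (neg_nonneg.2 hS) hφ'pos.le), mul_pos hsum (pow_pos hθ 2)]

/-- **Monotonicity lemma (decreasing branch).** For angles `φ ≥ φ'` in `(0,π)`, the function
`y(θ) = [1/sin θ + 1/sin(θ−φ')] / [1/sin(θ+φ) + 1/sin(θ−φ')]` is strictly decreasing on
`[π/2 − (φ−φ')/2, π − φ)`. -/
theorem y_strict_anti (φ φ' : ℝ)
    (hφ : φ ∈ Set.Ioo 0 Real.pi) (hφ' : φ' ∈ Set.Ioo 0 Real.pi) (hle : φ' ≤ φ) :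
    StrictAntiOn
      (fun θ : ℝ =>
        (1 / Real.sin θ + 1 / Real.sin (θ - φ')) /
          (1 / Real.sin (θ + φ) + 1 / Real.sin (θ - φ')))
      (Set.Ico (Real.pi / 2 - (φ - φ') / 2) (Real.pi - φ)) := by
  show StrictAntiOn (sinRatio φ φ') _
  obtain ⟨-, hφπ⟩ := hφ
  obtain ⟨hφ'₀, -⟩ := hφ'
  have hpos : ∀ θ ∈ Ico (π / 2 - (φ - φ') / 2) (π - φ),
      0 < sin θ ∧ 0 < sin (θ - φ') ∧ 0 < sin (θ + φ) := fun θ ⟨hθ₁, hθ₂⟩ ↦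
    ⟨sin_pos_of_pos_of_lt_pi (by linarith) (by linarith),
      sin_pos_of_pos_of_lt_pi (by linarith) (by linarith),
      sin_pos_of_pos_of_lt_pi (by linarith) (by linarith)⟩
  have hderiv : ∀ θ ∈ Ico (π / 2 - (φ - φ') / 2) (π - φ), HasDerivAt (sinRatio φ φ')
      ((sin (θ + φ) ^ 2 * sin φ' - sin (θ - φ') ^ 2 * sin φ - sin θ ^ 2 * sin (φ + φ')) /
        (sin θ * (sin (θ - φ') + sin (θ + φ))) ^ 2) θ := fun θ hθ ↦
    have ⟨ha, hb, hc⟩ := hpos θ hθ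
    hasDerivAt_sinRatio ha.ne' hb.ne' hc.ne' (add_pos hb hc).ne'
  refine strictAntiOn_of_deriv_neg (convex_Ico _ _)
    (fun θ hθ ↦ (hderiv θ hθ).continuousAt.continuousWithinAt) fun θ hθ ↦ ?_
  rw [interior_Ico] at hθ
  have ⟨ha, hb, hc⟩ := hpos θ (Ioo_subset_Ico_self hθ)
  rw [(hderiv θ (Ioo_subset_Ico_self hθ)).deriv]
  exact div_neg_of_neg_of_pos (sinRatio_deriv_numerator_neg hφ'₀ hle hθ.1.le hθ.2)
    (by positivity)
end
end

section
/- Let p, q, v be points in the Euclidean plane with ∠pvq = γ ∈ (0, π). Then ‖p−v‖ + ‖q−v‖ ≤ ‖p−q‖ / sin(γ/2). -/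
/-! By the law of cosines and `2 sin²(γ/2) = 1 - cos γ`,
`c² - (a + b)² sin²(γ/2) = (a - b)² (1 + cos γ) / 2 ≥ 0` for the sides `a, b` at the vertex
and the opposite side `c`. -/

open Set Metric
open scoped ENNReal

noncomputable section

open EuclideanGeometry

theorem Real.sin_sq_half (x : ℝ) : Real.sin (x / 2) ^ 2 = (1 - Real.cos x) / 2 := by
  rw [Real.sin_sq, Real.cos_sq, mul_div_cancel₀ x two_ne_zero]
  ring

theorem EuclideanGeometry.dist_add_dist_mul_sin_half_angle_le {V P : Type*}
    [NormedAddCommGroup V] [InnerProductSpace ℝ V] [MetricSpace P] [NormedAddTorsor V P]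
    (p q v : P) : (dist p v + dist q v) * Real.sin (∠ p v q / 2) ≤ dist p q := by
  have hcos := law_cos p v q
  set a := dist p v
  set b := dist q v
  set γ := ∠ p v q
  have hgap : dist p q ^ 2 - ((a + b) * Real.sin (γ / 2)) ^ 2
      = (a - b) ^ 2 * (1 + Real.cos γ) / 2 := by
    rw [mul_pow, Real.sin_sq_half, sq, hcos]
    ring
  have hsq : ((a + b) * Real.sin (γ / 2)) ^ 2 ≤ dist p q ^ 2 := by
    have : 0 ≤ (a - b) ^ 2 * (1 + Real.cos γ) / 2 :=
      div_nonneg (mul_nonneg (sq_nonneg _) (neg_le_iff_add_nonneg'.1 (Real.neg_one_le_cos γ)))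
        zero_le_two
    linarith
  exact (abs_le_of_sq_le_sq' hsq dist_nonneg).2

/-- **Two-sides bound.** For points `p, q, v` in the Euclidean plane with
`∠pvq = γ ∈ (0, π)`, one has `‖p−v‖ + ‖q−v‖ ≤ ‖p−q‖ / sin(γ/2)`. -/
theorem sum_sides_le (p q v : Euc 2) (γ : ℝ) (hγ : γ ∈ Set.Ioo 0 Real.pi)
    (hangle : EuclideanGeometry.angle p v q = γ) :
    dist p v + dist q v ≤ dist p q / Real.sin (γ / 2) := by
  have hsin : 0 < Real.sin (γ / 2) :=
    Real.sin_pos_of_pos_of_lt_pi (half_pos hγ.1) (by linarith [hγ.2, Real.pi_pos])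
  rw [le_div_iff₀ hsin, ← hangle]
  exact dist_add_dist_mul_sin_half_angle_le p q v
end
end

section
/- Let K be the Vietoris–Rips complex at scale β of a finite point set S ⊂ ℝ² under the Euclidean metric. If edges [AB], [CD] ∈ K have intersecting segments AB ∩ CD ≠ ∅, and E ∈ {A,B,C,D} is a point among the four vertices closest (in Euclidean distance) to the intersection point, then [ABE] and [CDE] are both simplices of K; i.e., the Euclidean Vietoris–Rips complex of a planar point set satisfies condition (A) of the shadow path lifting condition. -/
open Set Metric
open scoped ENNReal

noncomputable section

section Betweenness

variable {α : Type*} [PseudoMetricSpace α]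

theorem dist_le_of_dist_add_dist_eq_of_dist_le {A B E v : α}
    (hv : dist A v + dist v B = dist A B) (hE : dist E v ≤ dist B v) :
    dist A E ≤ dist A B :=
  calc dist A E ≤ dist A v + dist v E := dist_triangle A v E
    _ ≤ dist A v + dist v B := by rw [dist_comm v E, dist_comm v B]; gcongr
    _ = dist A B := hv

theorem dist_lt_and_dist_lt_of_dist_add_dist_eq {A B E v : α} {β : ℝ}
    (hv : dist A v + dist v B = dist A B) (hAB : dist A B < β)
    (hEA : dist E v ≤ dist A v) (hEB : dist E v ≤ dist B v) :
    dist A E < β ∧ dist B E < β := by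
  have hv' : dist B v + dist v A = dist B A := by
    rw [add_comm, dist_comm v A, dist_comm B v, dist_comm B A, ← hv]
  exact ⟨(dist_le_of_dist_add_dist_eq_of_dist_le hv hEB).trans_lt hAB,
    (dist_le_of_dist_add_dist_eq_of_dist_le hv' hEA).trans_lt (dist_comm A B ▸ hAB)⟩

end Betweenness

theorem euclidean_rips_lifting_general (β : ℝ)
    (A B C D E v : Euc 2)
    (hAB : dist A B < β) (hCD : dist C D < β)
    (hv : v ∈ segment ℝ A B ∩ segment ℝ C D)
    (hmin : ∀ X ∈ ({A, B, C, D} : Set (Euc 2)), dist E v ≤ dist X v) :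
    dist A E < β ∧ dist B E < β ∧ dist C E < β ∧ dist D E < β := by
  obtain ⟨hvAB, hvCD⟩ := hv
  obtain ⟨hAE, hBE⟩ := dist_lt_and_dist_lt_of_dist_add_dist_eq
    (dist_add_dist_of_mem_segment hvAB) hAB (hmin A (by simp)) (hmin B (by simp))
  obtain ⟨hCE, hDE⟩ := dist_lt_and_dist_lt_of_dist_add_dist_eq
    (dist_add_dist_of_mem_segment hvCD) hCD (hmin C (by simp)) (hmin D (by simp))
  exact ⟨hAE, hBE, hCE, hDE⟩

/-- **Euclidean Rips complexes satisfy lifting condition (A).** Let `K` be the Vietoris–Rips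
complex at scale `β` of a finite planar point set `S` under the Euclidean metric. If
`[AB], [CD] ∈ K` (i.e. `A,B,C,D ∈ S` with `dist A B < β` and `dist C D < β`), the segments
`AB` and `CD` meet at a point `v`, and `E ∈ {A,B,C,D}` is closest to `v` among the four
vertices, then `[ABE]` and `[CDE]` are simplices of `K`: the sets `{A,B,E}` and `{C,D,E}`
both have Euclidean diameter `< β`. -/
theorem euclidean_rips_lifting (S : Finset (Euc 2)) (β : ℝ)
    (A B C D E v : Euc 2)
    (hA : A ∈ S) (hB : B ∈ S) (hC : C ∈ S) (hD : D ∈ S)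
    (hAB : dist A B < β) (hCD : dist C D < β)
    (hv : v ∈ segment ℝ A B ∩ segment ℝ C D)
    (hE : E ∈ ({A, B, C, D} : Set (Euc 2)))
    (hmin : ∀ X ∈ ({A, B, C, D} : Set (Euc 2)), dist E v ≤ dist X v) :
    dist A E < β ∧ dist B E < β ∧ dist C E < β ∧ dist D E < β :=
  euclidean_rips_lifting_general β A B C D E v hAB hCD hv hmin
end
end
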